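/- arXiv:2206.00980 — 4 statements merged into one kernel-verified Lean document; each statement's English description precedes it below -/
import Mathlib

section
/- Let G be a connected simple graph of order n such that n is a Laplacian eigenvalue of G with multiplicity exactly 2. Then 1 is not a Laplacian eigenvalue of G. -/
open SimpleGraph Polynomial

/-- The multiset of Laplacian eigenvalues (roots of the characteristic polynomial of the
Laplacian matrix over `ℝ`, with multiplicity) of a simple graph. -/
noncomputable def lapSpec {V : Type*} [Fintype V] [DecidableEq V] (G : SimpleGraph V) :
    Multiset ℝ :=
  letI := Classical.decRel G.Adj
  ((G.lapMatrix ℝ).charpoly).roots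

/-- The disjoint union of two simple graphs. -/
def graphUnion {α β : Type*} (G : SimpleGraph α) (H : SimpleGraph β) : SimpleGraph (α ⊕ β) :=
  SimpleGraph.fromRel fun x y =>
    (∃ a b, x = Sum.inl a ∧ y = Sum.inl b ∧ G.Adj a b) ∨
    (∃ a b, x = Sum.inr a ∧ y = Sum.inr b ∧ H.Adj a b)

/-- The join of two simple graphs: the disjoint union together with all edges between the parts. -/
def graphJoin {α β : Type*} (G : SimpleGraph α) (H : SimpleGraph β) : SimpleGraph (α ⊕ β) :=
  SimpleGraph.fromRel fun x y =>
    (∃ a b, x = Sum.inl a ∧ y = Sum.inl b ∧ G.Adj a b) ∨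
    (∃ a b, x = Sum.inr a ∧ y = Sum.inr b ∧ H.Adj a b) ∨
    (∃ a b, x = Sum.inl a ∧ y = Sum.inr b)

/-- `G` is a join of two nonempty graphs. -/
def IsJoin {γ : Type*} [Fintype γ] (G : SimpleGraph γ) : Prop :=
  ∃ (p q : ℕ) (F : SimpleGraph (Fin p)) (H : SimpleGraph (Fin q)),
    0 < p ∧ 0 < q ∧ Nonempty (G ≃g graphJoin F H)

/-- The multiset `S_{{i,j},n}^m`: the integers `0,1,…,n` with `i` and `j` removed and an extra
copy of `m` added (so `m` is counted twice), viewed as a multiset of reals. -/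
def Sdouble (i j n m : ℕ) : Multiset ℝ :=
  ((m ::ₘ (((Finset.range (n + 1)).val.erase i).erase j)).map (fun k : ℕ => (k : ℝ)))

/-- The multiset `S_{j,n} = {0,1,…,n} \ {j}`, viewed as a multiset of reals. -/
def Ssingle (j n : ℕ) : Multiset ℝ :=
  (((Finset.range (n + 1)).val.erase j).map (fun k : ℕ => (k : ℝ)))

/-- The one-vertex graph `K₁`. -/
def K1 : SimpleGraph (Fin 1) := ⊥

/-- The complete graph `K₂` on two vertices. -/
def K2 : SimpleGraph (Fin 2) := ⊤


/-!
Write `n = |V|` and `Ḡ = Gᶜ`. Since `L(G) + L(Ḡ) = nI - J` and every eigenvector of `L(G)` for a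
nonzero eigenvalue `μ` is orthogonal to the all-ones vector, such an eigenvector is an eigenvector
of `L(Ḡ)` for `n - μ`. Hence the eigenspace of `n`, together with the constants, lies in
`ker L(Ḡ)`, so `Ḡ` has at least three connected components and each of them has at most `n - 2`
vertices. Bounding `xᵀ L(Ḡ) x` by the sum of `(x i - x j) ^ 2` over pairs inside components shows
that every Laplacian eigenvalue of `Ḡ` is at most `n - 2`; but an eigenvector of `L(G)` for `1`
is one of `L(Ḡ)` for `n - 1`.
-/

open Matrix Module Module.End Finset

namespace Matrix.IsHermitian

variable {𝕜 n : Type*} [RCLike 𝕜] [Fintype n] [DecidableEq n] {A : Matrix n n 𝕜}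

theorem isSemisimple_toLin' (hA : A.IsHermitian) : IsSemisimple (toLin' A) :=
  (LinearEquiv.isSemisimple_iff _ (toLin' A) (WithLp.linearEquiv 2 𝕜 (n → 𝕜)) rfl).mp <|
    isFinitelySemisimple_iff_isSemisimple.mp
      (isSymmetric_toEuclideanLin_iff.mpr hA).isFinitelySemisimple

theorem finrank_eigenspace_toLin' (hA : A.IsHermitian) (μ : 𝕜) :
    finrank 𝕜 (eigenspace (toLin' A) μ) = A.charpoly.roots.count μ := by
  rw [count_roots, ← charpoly_toLin', ← LinearMap.finrank_maxGenEigenspace_eq,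
    hA.isSemisimple_toLin'.isFinitelySemisimple.maxGenEigenspace_eq_eigenspace]

end Matrix.IsHermitian

theorem Finset.sum_sum_sub_sq {ι R : Type*} [CommRing R] (s : Finset ι) (x : ι → R) :
    ∑ i ∈ s, ∑ j ∈ s, (x i - x j) ^ 2 = 2 * (#s * ∑ i ∈ s, x i ^ 2 - (∑ i ∈ s, x i) ^ 2) := by
  simp only [sub_sq, sum_add_distrib, sum_sub_distrib, sum_const, nsmul_eq_mul]
  rw [sq (∑ i ∈ s, x i), sum_mul_sum]
  simp only [mul_assoc, ← mul_sum, ← sum_mul]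
  ring

theorem Finset.card_filter_eq_add_card_le_of_surjective {α β : Type*} [Fintype α] [Fintype β]
    [DecidableEq β] {f : α → β} (hf : Function.Surjective f) (b : β) :
    #{a | f a = b} + Fintype.card β ≤ Fintype.card α + 1 := by
  have hfib : Fintype.card α = ∑ b', #{a | f a = b'} :=
    card_eq_sum_card_fiberwise fun a _ => mem_univ (f a)
  have hpos (b' : β) : 1 ≤ #{a | f a = b'} := by
    obtain ⟨a, rfl⟩ := hf b'
    exact card_pos.mpr ⟨a, by simp⟩
  have hothers := sum_le_sum fun b' (_ : b' ∈ univ.erase b) => hpos b'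
  rw [← add_sum_erase _ _ (mem_univ b)] at hfib
  simp only [sum_const, card_erase_of_mem (mem_univ b), card_univ, smul_eq_mul,
    mul_one] at hothers
  have : 1 ≤ Fintype.card β := Fintype.card_pos_iff.mpr ⟨b⟩
  omega

namespace SimpleGraph

variable {V R : Type*} [Fintype V] [DecidableEq V] (G : SimpleGraph V) [DecidableRel G.Adj]

theorem degree_add_degree_compl (v : V) : G.degree v + Gᶜ.degree v + 1 = Fintype.card V := by
  have := G.degree_lt_card_verts v
  rw [degree_compl]
  omega

theorem lapMatrix_add_lapMatrix_compl [Ring R] :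
    G.lapMatrix R + Gᶜ.lapMatrix R = (Fintype.card V : R) • 1 - of fun _ _ => 1 := by
  ext i j
  by_cases hij : i = j
  · subst hij
    simp [lapMatrix, degMatrix, ← G.degree_add_degree_compl i]
  · by_cases hadj : G.Adj i j <;>
      simp [lapMatrix, degMatrix, adjMatrix_apply, hij, hadj]

theorem lapMatrix_compl_mulVec_of_sum_eq_zero [Ring R] {x : V → R} (hx : ∑ i, x i = 0) :
    Gᶜ.lapMatrix R *ᵥ x = (Fintype.card V : R) • x - G.lapMatrix R *ᵥ x := by
  rw [eq_sub_iff_add_eq', ← add_mulVec, lapMatrix_add_lapMatrix_compl]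
  have hJ : (of fun _ _ => (1 : R) : Matrix V V R) *ᵥ x = 0 := by
    ext i
    simp [mulVec, dotProduct, hx]
  rw [sub_mulVec, smul_mulVec, one_mulVec, hJ, sub_zero]

theorem sum_eq_zero_of_mem_eigenspace_lapMatrix [CommRing R] [NoZeroDivisors R] {μ : R}
    (hμ : μ ≠ 0) {x : V → R} (hx : x ∈ eigenspace (toLin' (G.lapMatrix R)) μ) :
    ∑ i, x i = 0 := by
  rw [mem_eigenspace_iff, toLin'_apply] at hx
  have hL : (fun _ => 1) ᵥ* G.lapMatrix R = 0 := by
    rw [← mulVec_transpose, (G.isSymm_lapMatrix R).eq, lapMatrix_mulVec_const_eq_zero]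
  have : μ * ∑ i, x i = 0 := by
    simpa [dotProduct, hx, mul_sum, hL] using
      dotProduct_mulVec (fun _ => (1 : R)) (G.lapMatrix R) x
  exact (mul_eq_zero.mp this).resolve_left hμ

theorem eigenspace_lapMatrix_le_eigenspace_lapMatrix_compl [CommRing R] [NoZeroDivisors R]
    {μ : R} (hμ : μ ≠ 0) :
    eigenspace (toLin' (G.lapMatrix R)) μ ≤
      eigenspace (toLin' (Gᶜ.lapMatrix R)) (Fintype.card V - μ) := by
  intro x hx
  have hsum := G.sum_eq_zero_of_mem_eigenspace_lapMatrix hμ hx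
  rw [mem_eigenspace_iff, toLin'_apply] at hx ⊢
  rw [G.lapMatrix_compl_mulVec_of_sum_eq_zero hsum, hx, sub_smul]

theorem count_roots_charpoly_lapMatrix_add_one_le [Nonempty V] :
    (G.lapMatrix ℝ).charpoly.roots.count (Fintype.card V : ℝ) + 1 ≤
      Fintype.card Gᶜ.ConnectedComponent := by
  set E := eigenspace (toLin' (G.lapMatrix ℝ)) (Fintype.card V)
  set one : Submodule ℝ (V → ℝ) := Submodule.span ℝ {fun _ => 1}
  have hcard : (Fintype.card V : ℝ) ≠ 0 := by positivity
  have hE : E ≤ LinearMap.ker (toLin' (Gᶜ.lapMatrix ℝ)) := by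
    simpa [eigenspace_zero] using G.eigenspace_lapMatrix_le_eigenspace_lapMatrix_compl hcard
  have hone : one ≤ LinearMap.ker (toLin' (Gᶜ.lapMatrix ℝ)) := by
    rw [Submodule.span_le, Set.singleton_subset_iff, SetLike.mem_coe, LinearMap.mem_ker,
      toLin'_apply, lapMatrix_mulVec_const_eq_zero]
  have hdisj : E ⊓ one = ⊥ := by
    refine Submodule.eq_bot_iff _ |>.mpr fun x ⟨hxE, hxone⟩ => ?_
    obtain ⟨c, rfl⟩ := Submodule.mem_span_singleton.mp hxone
    have := G.sum_eq_zero_of_mem_eigenspace_lapMatrix hcard hxE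
    simp_all
  have hsup := Submodule.finrank_sup_add_finrank_inf_eq E one
  rw [hdisj, finrank_bot, add_zero,
    finrank_span_singleton (Function.ne_iff.mpr ⟨Classical.arbitrary V, one_ne_zero⟩),
    (G.isHermitian_lapMatrix ℝ).finrank_eigenspace_toLin'] at hsup
  rw [card_connectedComponent_eq_finrank_ker_toLin'_lapMatrix, ← hsup]
  exact Submodule.finrank_mono (sup_le hE hone)

variable [DecidableEq G.ConnectedComponent] {m : ℝ}

theorem dotProduct_lapMatrix_mulVec_le
    (hm : ∀ c : G.ConnectedComponent, (#{v | G.connectedComponentMk v = c} : ℝ) ≤ m) (x : V → ℝ) :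
    x ⬝ᵥ (G.lapMatrix ℝ *ᵥ x) ≤ m * (x ⬝ᵥ x) := by
  have hquad := G.lapMatrix_toLinearMap₂' ℝ x
  rw [toLinearMap₂'_apply'] at hquad
  have key : (∑ i, ∑ j, if G.Adj i j then (x i - x j) ^ 2 else 0) ≤ 2 * m * ∑ i, x i ^ 2 := by
    calc (∑ i, ∑ j, if G.Adj i j then (x i - x j) ^ 2 else 0)
        = ∑ c, ∑ i with G.connectedComponentMk i = c,
            ∑ j, if G.Adj i j then (x i - x j) ^ 2 else 0 := (sum_fiberwise _ _ _).symm
      _ ≤ ∑ c, ∑ i with G.connectedComponentMk i = c,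
            ∑ j with G.connectedComponentMk j = c, (x i - x j) ^ 2 := by
        refine sum_le_sum fun c _ => sum_le_sum fun i hi => ?_
        rw [← sum_filter]
        refine sum_le_sum_of_subset_of_nonneg (fun j hj => ?_) fun _ _ _ => sq_nonneg _
        rw [mem_filter] at hi hj ⊢
        exact ⟨mem_univ j, (ConnectedComponent.sound hj.2.reachable).symm.trans hi.2⟩
      _ ≤ ∑ c, 2 * m * ∑ i with G.connectedComponentMk i = c, x i ^ 2 := by
        refine sum_le_sum fun c _ => ?_
        rw [sum_sum_sub_sq]
        have hsq : 0 ≤ ∑ i with G.connectedComponentMk i = c, x i ^ 2 :=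
          sum_nonneg fun _ _ => sq_nonneg _
        linarith [mul_le_mul_of_nonneg_right (hm c) hsq,
          sq_nonneg (∑ i with G.connectedComponentMk i = c, x i)]
      _ = 2 * m * ∑ i, x i ^ 2 := by rw [← mul_sum, sum_fiberwise]
  simp only [dotProduct, ← sq] at hquad ⊢
  linarith

theorem le_of_lapMatrix_mulVec_eq_smul
    (hm : ∀ c : G.ConnectedComponent, (#{v | G.connectedComponentMk v = c} : ℝ) ≤ m) {μ : ℝ}
    {x : V → ℝ} (hx : G.lapMatrix ℝ *ᵥ x = μ • x) (hx0 : x ≠ 0) : μ ≤ m := by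
  have hbound := G.dotProduct_lapMatrix_mulVec_le hm x
  rw [hx, dotProduct_smul, smul_eq_mul] at hbound
  have hpos : 0 < x ⬝ᵥ x := lt_of_le_of_ne (Fintype.sum_nonneg fun i => mul_self_nonneg (x i))
    (Ne.symm (dotProduct_self_eq_zero.not.mpr hx0))
  exact le_of_mul_le_mul_right hbound hpos

end SimpleGraph

theorem one_not_mem_lapSpec_of_double_card_eigenvalue_general {V : Type*} [Fintype V] [DecidableEq V]
    (G : SimpleGraph V)
    (h2 : (lapSpec G).count (Fintype.card V : ℝ) = 2) :
    (1 : ℝ) ∉ lapSpec G := by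
  -- `lapSpec` is defined with this instance
  let := Classical.decRel G.Adj
  classical
  unfold lapSpec at h2 ⊢
  intro h1
  obtain ⟨x, hvec⟩ := HasEigenvalue.exists_hasEigenvector <|
    (hasEigenvalue_iff_isRoot_charpoly (toLin' (G.lapMatrix ℝ)) 1).mpr <| by
      rw [charpoly_toLin']; exact isRoot_of_mem_roots h1
  obtain ⟨hx, hx0⟩ := hasEigenvector_iff.mp hvec
  have : Nonempty V := ⟨(Function.ne_iff.mp hx0).choose⟩
  have h3 : 3 ≤ Fintype.card Gᶜ.ConnectedComponent := by
    simpa [h2] using G.count_roots_charpoly_lapMatrix_add_one_le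
  have hsmall (c : Gᶜ.ConnectedComponent) :
      (#{v | Gᶜ.connectedComponentMk v = c} : ℝ) ≤ Fintype.card V - 2 := by
    have := card_filter_eq_add_card_le_of_surjective (f := Gᶜ.connectedComponentMk)
      (fun c => c.exists_rep) c
    rw [le_sub_iff_add_le]
    exact_mod_cast (by omega : #{v | Gᶜ.connectedComponentMk v = c} + 2 ≤ Fintype.card V)
  have hxc : Gᶜ.lapMatrix ℝ *ᵥ x = ((Fintype.card V : ℝ) - 1) • x := by
    simpa [mem_eigenspace_iff] using
      G.eigenspace_lapMatrix_le_eigenspace_lapMatrix_compl one_ne_zero hx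
  linarith [Gᶜ.le_of_lapMatrix_mulVec_eq_smul hsmall hxc hx0]

/-- If `n` is a Laplacian eigenvalue of the connected graph `G` of order `n` with multiplicity
exactly `2`, then `1` is not a Laplacian eigenvalue of `G`. -/
theorem one_not_mem_lapSpec_of_double_card_eigenvalue {V : Type*} [Fintype V] [DecidableEq V]
    (G : SimpleGraph V) (hG : G.Connected)
    (h2 : (lapSpec G).count (Fintype.card V : ℝ) = 2) :
    (1 : ℝ) ∉ lapSpec G :=
  one_not_mem_lapSpec_of_double_card_eigenvalue_general G h2
end

section
/- Let G be a simple graph that is the join of two nonempty graphs. Then 1 is a Laplacian eigenvalue of G if and only if G = F ∨ K₁ where F is a disconnected graph of order at least 2 (K₁ being the one-vertex graph). -/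
open SimpleGraph Polynomial

/-!
Write an eigenvector of `L(F ∨ H)` for the eigenvalue `1` as `(x, y)`, with `|F| = p`, `|H| = q`.
It is orthogonal to the constant vector, and since `L(F ∨ H)` is the block matrix
`[[L(F) + q I, -J], [-J, L(H) + p I]]`, its first block row reads `L(F) x = (1 - q) x - (∑ x) 𝟙`.
Pairing with `x` and using that `L(F)` is positive semidefinite forces `∑ x = 0` and, when
`x ≠ 0`, also `q = 1` and `L(F) x = 0`; a nonzero vector in the kernel of `L(F)` with zero sum
exists exactly when `F` is disconnected. Conversely, such a vector extended by `0` on `K₁` is an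
eigenvector of `L(F ∨ K₁)` for the eigenvalue `1`.
-/

open Finset Matrix

namespace SimpleGraph

section Join

variable {α β : Type*} (A : SimpleGraph α) (B : SimpleGraph β)

@[simp] lemma graphJoin_adj_inl_inl {a a' : α} :
    (graphJoin A B).Adj (.inl a) (.inl a') ↔ A.Adj a a' := by
  simpa [graphJoin, A.adj_comm a'] using @ne_of_adj _ A a a'

@[simp] lemma graphJoin_adj_inl_inr {a : α} {b : β} : (graphJoin A B).Adj (.inl a) (.inr b) := by
  simp [graphJoin]

@[simp] lemma graphJoin_adj_inr_inl {a : α} {b : β} : (graphJoin A B).Adj (.inr b) (.inl a) := by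
  simp [graphJoin]

@[simp] lemma graphJoin_adj_inr_inr {b b' : β} :
    (graphJoin A B).Adj (.inr b) (.inr b') ↔ B.Adj b b' := by
  simpa [graphJoin, B.adj_comm b'] using @ne_of_adj _ B b b'

def graphJoinComm : graphJoin A B ≃g graphJoin B A where
  toEquiv := Equiv.sumComm α β
  map_rel_iff' := by rintro (a | b) (a' | b') <;> simp

variable [Fintype α] [Fintype β]

lemma degree_graphJoin_inl [DecidableRel A.Adj] [DecidableRel (graphJoin A B).Adj] (a : α) :
    (graphJoin A B).degree (.inl a) = A.degree a + Fintype.card β := by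
  have hJ := (graphJoin A B).degree_eq_sum_if_adj (R := ℕ) (.inl a)
  have hA := A.degree_eq_sum_if_adj (R := ℕ) a
  simp only [Nat.cast_id] at hJ hA
  rw [hJ, hA, Fintype.sum_sum_type]
  simp

lemma degree_graphJoin_inr [DecidableRel B.Adj] [DecidableRel (graphJoin A B).Adj] (b : β) :
    (graphJoin A B).degree (.inr b) = B.degree b + Fintype.card α := by
  have hJ := (graphJoin A B).degree_eq_sum_if_adj (R := ℕ) (.inr b)
  have hB := B.degree_eq_sum_if_adj (R := ℕ) b
  simp only [Nat.cast_id] at hJ hB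
  rw [hJ, hB, Fintype.sum_sum_type]
  simp [add_comm]

variable [DecidableEq α] [DecidableEq β] [DecidableRel A.Adj] [DecidableRel B.Adj]
  [DecidableRel (graphJoin A B).Adj] {R : Type*}

lemma lapMatrix_graphJoin [Ring R] :
    (graphJoin A B).lapMatrix R = fromBlocks (A.lapMatrix R + (Fintype.card β : R) • 1)
      (-of fun _ _ => 1) (-of fun _ _ => 1) (B.lapMatrix R + (Fintype.card α : R) • 1) := by
  ext (a | b) (a' | b')
  · rcases eq_or_ne a a' with rfl | h
    · simp [lapMatrix, degMatrix, degree_graphJoin_inl]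
    · simp [lapMatrix, degMatrix, h]
  · simp [lapMatrix, degMatrix]
  · simp [lapMatrix, degMatrix]
  · rcases eq_or_ne b b' with rfl | h
    · simp [lapMatrix, degMatrix, degree_graphJoin_inr]
    · simp [lapMatrix, degMatrix, h]

lemma lapMatrix_graphJoin_mulVec [CommRing R] (x : α → R) (y : β → R) :
    (graphJoin A B).lapMatrix R *ᵥ Sum.elim x y =
      Sum.elim (A.lapMatrix R *ᵥ x + (Fintype.card β : R) • x - (∑ b, y b) • 1)
        (B.lapMatrix R *ᵥ y + (Fintype.card α : R) • y - (∑ a, x a) • 1) := by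
  rw [lapMatrix_graphJoin, fromBlocks_mulVec]
  simp only [add_mulVec, smul_mulVec, one_mulVec, neg_mulVec]
  congr 1 <;> ext <;> simp [mulVec, dotProduct, sub_eq_add_neg, add_comm]

end Join

section Laplacian

variable {V W : Type*} [Fintype V] [DecidableEq V] [Fintype W] [DecidableEq W]

lemma lapSpec_eq_roots_charpoly (G : SimpleGraph V) [DecidableRel G.Adj] :
    lapSpec G = (G.lapMatrix ℝ).charpoly.roots := by
  unfold lapSpec
  congr!

lemma mem_lapSpec_iff (G : SimpleGraph V) [DecidableRel G.Adj] (r : ℝ) :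
    r ∈ lapSpec G ↔ ∃ v ≠ 0, G.lapMatrix ℝ *ᵥ v = r • v := by
  rw [lapSpec_eq_roots_charpoly, mem_roots (charpoly_monic _).ne_zero, ← charpoly_toLin',
    ← Module.End.hasEigenvalue_iff_isRoot_charpoly, Module.End.hasEigenvalue_iff,
    Submodule.ne_bot_iff]
  simp [and_comm]

lemma Iso.submatrix_lapMatrix {G : SimpleGraph V} {G' : SimpleGraph W} [DecidableRel G.Adj]
    [DecidableRel G'.Adj] {R : Type*} [Ring R] (e : G ≃g G') :
    (G'.lapMatrix R).submatrix e e = G.lapMatrix R := by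
  ext i j
  rcases eq_or_ne i j with rfl | h
  · simp [lapMatrix, degMatrix]
  · simp [lapMatrix, degMatrix, h, e.map_adj_iff]

lemma Iso.lapSpec_eq {G : SimpleGraph V} {G' : SimpleGraph W} (e : G ≃g G') :
    lapSpec G = lapSpec G' := by
  classical
  rw [lapSpec_eq_roots_charpoly, lapSpec_eq_roots_charpoly, ← e.submatrix_lapMatrix,
    ← charpoly_reindex e.toEquiv.symm]
  rfl

variable (G : SimpleGraph V) [DecidableRel G.Adj]

lemma sum_lapMatrix_mulVec (v : V → ℝ) : ∑ i, (G.lapMatrix ℝ *ᵥ v) i = 0 := by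
  rw [← dotProduct_one, dotProduct_comm, dotProduct_mulVec, ← mulVec_transpose,
    (G.isSymm_lapMatrix (R := ℝ)).eq, show (1 : V → ℝ) = fun _ => 1 from rfl,
    lapMatrix_mulVec_const_eq_zero, zero_dotProduct]

lemma sum_eq_zero_of_lapMatrix_mulVec_eq {c : ℝ} (hc : c ≤ 0) {x : V → ℝ}
    (h : G.lapMatrix ℝ *ᵥ x = c • x - (∑ i, x i) • 1) : ∑ i, x i = 0 ∧ (c = 0 ∨ x = 0) := by
  have hform : x ⬝ᵥ (G.lapMatrix ℝ *ᵥ x) = c * (x ⬝ᵥ x) - (∑ i, x i) ^ 2 := by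
    rw [h, dotProduct_sub, dotProduct_smul, dotProduct_smul, dotProduct_one, smul_eq_mul,
      smul_eq_mul, sq]
  have hL := (posSemidef_lapMatrix ℝ G).dotProduct_mulVec_nonneg x
  rw [star_trivial, hform] at hL
  have hxx : 0 ≤ x ⬝ᵥ x := by simpa using dotProduct_star_self_nonneg x
  have hcx : c * (x ⬝ᵥ x) ≤ 0 := mul_nonpos_of_nonpos_of_nonneg hc hxx
  have hs : ∑ i, x i = 0 := by nlinarith [sq_nonneg (∑ i, x i)]
  refine ⟨hs, ?_⟩
  rw [hs] at hL
  rcases mul_eq_zero.1 (by linarith : c * (x ⬝ᵥ x) = 0) with h | h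
  · exact .inl h
  · exact .inr (dotProduct_self_eq_zero.1 h)

lemma not_connected_of_lapMatrix_mulVec_eq_zero {x : V → ℝ} (hx : x ≠ 0)
    (hL : G.lapMatrix ℝ *ᵥ x = 0) (hs : ∑ i, x i = 0) : ¬G.Connected := by
  intro hG
  obtain ⟨i⟩ := hG.nonempty
  have hconst : ∀ j, x j = x i := fun j =>
    (lapMatrix_mulVec_eq_zero_iff_forall_reachable G).1 hL j i (hG.preconnected j i)
  have hi : x i = 0 := by
    simpa [hconst, (Fintype.card_pos_iff.2 ⟨i⟩).ne'] using hs
  exact hx (funext fun j => (hconst j).trans hi)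

lemma exists_lapMatrix_mulVec_eq_zero_of_not_connected [Nonempty V] (h : ¬G.Connected) :
    ∃ x ≠ 0, G.lapMatrix ℝ *ᵥ x = 0 ∧ ∑ i, x i = 0 := by
  obtain ⟨i, j, hij⟩ : ∃ i j, ¬G.Reachable i j := by
    simpa [connected_iff, Preconnected] using h
  set c : ℝ := Nat.cast #{w | G.Reachable i w}
  set x : V → ℝ := fun w => (if G.Reachable i w then (Fintype.card V : ℝ) else 0) - c
  refine ⟨x, fun h0 => ?_, ?_, ?_⟩
  · have hc : 0 < c := Nat.cast_pos.2 (card_pos.2 ⟨i, by simp⟩)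
    have := congrFun h0 j
    simp only [x, hij, ↓reduceIte, zero_sub, Pi.zero_apply, neg_eq_zero] at this
    exact hc.ne' this
  · refine (lapMatrix_mulVec_eq_zero_iff_forall_reachable G).2 fun u w huw => ?_
    have : G.Reachable i u ↔ G.Reachable i w := ⟨(·.trans huw), (·.trans huw.symm)⟩
    simp only [x, this]
  · simp [x, sum_sub_distrib, sum_ite, c, mul_comm]

lemma eq_one_and_not_connected_of_lapMatrix_mulVec_add_eq_self {q : ℕ} (hq : 1 ≤ q)
    {x : V → ℝ} (hx : x ≠ 0) (h : G.lapMatrix ℝ *ᵥ x + (q : ℝ) • x + (∑ i, x i) • 1 = x) :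
    q = 1 ∧ ¬G.Connected := by
  have hL : G.lapMatrix ℝ *ᵥ x = (1 - q : ℝ) • x - (∑ i, x i) • 1 := by
    linear_combination (norm := module) h
  obtain ⟨hs, hq1 | hx0⟩ :=
    G.sum_eq_zero_of_lapMatrix_mulVec_eq (sub_nonpos.2 (Nat.one_le_cast.2 hq)) hL
  · have hq1 : q = 1 := by exact_mod_cast (sub_eq_zero.1 hq1).symm
    refine ⟨hq1, G.not_connected_of_lapMatrix_mulVec_eq_zero hx ?_ hs⟩
    simp [hL, hq1, hs]
  · exact absurd hx0 hx

end Laplacian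

lemma one_lt_card_of_not_connected {V : Type*} [Fintype V] [Nonempty V] (G : SimpleGraph V)
    (h : ¬G.Connected) : 1 < Fintype.card V := by
  by_contra! hle
  have := Fintype.card_le_one_iff_subsingleton.1 hle
  exact h ⟨.of_subsingleton⟩

variable {α β : Type*} [Fintype α] [Fintype β] [DecidableEq α] [DecidableEq β]
  (A : SimpleGraph α) (B : SimpleGraph β)

lemma card_eq_one_and_not_connected_of_one_mem_lapSpec_graphJoin [Nonempty α] [Nonempty β]
    (h : 1 ∈ lapSpec (graphJoin A B)) :
    (Fintype.card β = 1 ∧ ¬A.Connected) ∨ (Fintype.card α = 1 ∧ ¬B.Connected) := by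
  classical
  obtain ⟨v, hv, hLv⟩ := ((graphJoin A B).mem_lapSpec_iff 1).1 h
  obtain ⟨x, y, rfl⟩ : ∃ x y, v = Sum.elim x y := ⟨_, _, (Sum.elim_comp_inl_inr v).symm⟩
  rw [one_smul] at hLv
  have hsum : ∑ a, x a + ∑ b, y b = 0 := by
    simpa [Fintype.sum_sum_type, hLv] using (graphJoin A B).sum_lapMatrix_mulVec (Sum.elim x y)
  rw [lapMatrix_graphJoin_mulVec, Sum.elim_eq_iff] at hLv
  obtain ⟨hx, hy⟩ := hLv
  rw [eq_neg_of_add_eq_zero_right hsum, neg_smul, sub_neg_eq_add] at hx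
  rw [eq_neg_of_add_eq_zero_left hsum, neg_smul, sub_neg_eq_add] at hy
  by_cases hx0 : x = 0
  · have hy0 : y ≠ 0 := fun hy0 => hv (by rw [hx0, hy0, Sum.elim_zero_zero])
    exact .inr <|
      B.eq_one_and_not_connected_of_lapMatrix_mulVec_add_eq_self Fintype.card_pos hy0 hy
  · exact .inl <|
      A.eq_one_and_not_connected_of_lapMatrix_mulVec_add_eq_self Fintype.card_pos hx0 hx

lemma one_mem_lapSpec_graphJoin_of_not_connected [Nonempty α] (hA : ¬A.Connected)
    (hB : Fintype.card β = 1) : 1 ∈ lapSpec (graphJoin A B) := by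
  classical
  obtain ⟨x, hx, hLx, hsx⟩ := A.exists_lapMatrix_mulVec_eq_zero_of_not_connected hA
  refine ((graphJoin A B).mem_lapSpec_iff 1).2 ⟨Sum.elim x 0, fun h => hx ?_, ?_⟩
  · exact funext fun a => congrFun h (.inl a)
  · rw [lapMatrix_graphJoin_mulVec, hLx, hsx, hB]
    simp

end SimpleGraph

/-- For a graph `G` which is a join of two nonempty graphs, `1` is a Laplacian eigenvalue of
`G` if and only if `G = F ∨ K₁` where `F` is a disconnected graph of order at least `2`. -/
theorem one_mem_lapSpec_join_iff {V : Type*} [Fintype V] [DecidableEq V]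
    (G : SimpleGraph V) (hG : IsJoin G) :
    (1 : ℝ) ∈ lapSpec G ↔
      ∃ (p : ℕ) (F : SimpleGraph (Fin p)), 2 ≤ p ∧ ¬ F.Connected ∧
        Nonempty (G ≃g graphJoin F K1) := by
  constructor
  · obtain ⟨p, q, F, H, hp, hq, ⟨e⟩⟩ := hG
    have : Nonempty (Fin p) := Fin.pos_iff_nonempty.1 hp
    have : Nonempty (Fin q) := Fin.pos_iff_nonempty.1 hq
    rw [e.lapSpec_eq]
    intro h
    rcases card_eq_one_and_not_connected_of_one_mem_lapSpec_graphJoin F H h with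
      ⟨hq1, hF⟩ | ⟨hp1, hH⟩
    · obtain rfl : q = 1 := by simpa using hq1
      exact ⟨p, F, Fintype.card_fin p ▸ F.one_lt_card_of_not_connected hF, hF,
        ⟨Subsingleton.elim H K1 ▸ e⟩⟩
    · obtain rfl : p = 1 := by simpa using hp1
      exact ⟨q, H, Fintype.card_fin q ▸ H.one_lt_card_of_not_connected hH, hH,
        ⟨Subsingleton.elim F K1 ▸ e.trans (graphJoinComm F H)⟩⟩
  · rintro ⟨p, F, hp, hF, ⟨e⟩⟩
    have : Nonempty (Fin p) := Fin.pos_iff_nonempty.1 (by omega)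
    rw [e.lapSpec_eq]
    exact one_mem_lapSpec_graphJoin_of_not_connected F K1 hF (Fintype.card_fin 1)
end

section
/- Let n ≥ 3, let 0 < i < j ≤ n and 1 ≤ m ≤ n, and suppose a simple graph G of order n has Laplacian spectrum equal (as a multiset) to {0,1,2,...,n} \ {i,j} with the element m doubled. If n ≡ 0 or 3 (mod 4), then i + j and m have the same parity; if n ≡ 1 or 2 (mod 4), then i + j and m have opposite parity. -/
/-!
The Laplacian eigenvalues sum to `tr L(G) = 2|E(G)|`, an even number, while the elements of
`S_{{i,j},n}^m` sum to `n(n+1)/2 - i - j + m`. Hence `i + j - m ≡ n(n+1)/2 (mod 2)`, and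
`n(n+1)/2` is even exactly when `n ≡ 0, 3 (mod 4)`.
-/

open SimpleGraph Polynomial

namespace SimpleGraph

variable {V : Type*} [Fintype V] [DecidableEq V] (G : SimpleGraph V) [DecidableRel G.Adj]

theorem trace_lapMatrix (R : Type*) [Ring R] :
    (G.lapMatrix R).trace = 2 * G.edgeFinset.card := by
  rw [lapMatrix, Matrix.trace_sub, trace_adjMatrix, sub_zero, degMatrix, Matrix.trace_diagonal,
    ← Nat.cast_sum, sum_degrees_eq_twice_card_edges]
  push_cast; rfl

theorem sum_lapSpec : (lapSpec G).sum = 2 * G.edgeFinset.card := by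
  -- `lapSpec` is built with the classical instance, so we switch to it.
  obtain rfl : ‹DecidableRel G.Adj› = Classical.decRel G.Adj := Subsingleton.elim _ _
  classical
  exact (Matrix.trace_eq_sum_roots_charpoly_of_splits
    (G.isHermitian_lapMatrix ℝ).splits_charpoly).symm.trans (G.trace_lapMatrix ℝ)

end SimpleGraph

theorem Nat.four_dvd_mul_succ_iff (n : ℕ) : 4 ∣ n * (n + 1) ↔ n % 4 = 0 ∨ n % 4 = 3 := by
  rw [Nat.dvd_iff_mod_eq_zero, Nat.mul_mod, Nat.add_mod]
  have := Nat.mod_lt n (by norm_num : 4 > 0)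
  interval_cases n % 4 <;> simp

theorem two_mul_sum_Sdouble {i j n : ℕ} (m : ℕ) (hij : i < j) (hj : j ≤ n) :
    2 * ((Sdouble i j n m).sum + i + j) = n * (n + 1) + 2 * m := by
  set S := (Finset.range (n + 1)).val
  have hiS : i ∈ S := by rw [Finset.mem_val, Finset.mem_range]; omega
  have hjS : j ∈ S.erase i := by
    rw [Multiset.mem_erase_of_ne hij.ne', Finset.mem_val, Finset.mem_range]; omega
  have hsum : i + (j + ((S.erase i).erase j).sum) = S.sum := by
    rw [Multiset.sum_erase hjS, Multiset.sum_erase hiS]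
  have gauss : S.sum * 2 = (n + 1) * n := by
    simpa [S, Finset.sum] using Finset.sum_range_id_mul_two (n + 1)
  have key : 2 * ((m ::ₘ (S.erase i).erase j).sum + i + j) = n * (n + 1) + 2 * m := by
    rw [Multiset.sum_cons]; linarith
  rw [Sdouble, ← Nat.cast_multiset_sum]
  exact_mod_cast key

theorem parity_condition_general {V : Type*} [Fintype V] [DecidableEq V] (G : SimpleGraph V)
    (n i j m : ℕ) (hij : i < j) (hj : j ≤ n)
    (hspec : lapSpec G = Sdouble i j n m) :
    ((n % 4 = 0 ∨ n % 4 = 3) → (i + j) % 2 = m % 2) ∧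
    ((n % 4 = 1 ∨ n % 4 = 2) → (i + j) % 2 ≠ m % 2) := by
  classical
  have htrace := two_mul_sum_Sdouble m hij hj
  rw [← hspec, G.sum_lapSpec] at htrace
  have hedges : 2 * (2 * G.edgeFinset.card + i + j) = n * (n + 1) + 2 * m := by
    exact_mod_cast htrace
  have h4 := Nat.four_dvd_mul_succ_iff n
  have h2 := (Nat.even_mul_succ_self n).two_dvd
  omega

/-- Parity condition: if a graph of order `n` realizes `S_{{i,j},n}^m`, then for
`n ≡ 0, 3 (mod 4)` the numbers `i+j` and `m` have the same parity, and for
`n ≡ 1, 2 (mod 4)` they have opposite parity. -/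
theorem parity_condition {V : Type*} [Fintype V] [DecidableEq V] (G : SimpleGraph V)
    (n i j m : ℕ) (hn : 3 ≤ n) (hcard : Fintype.card V = n)
    (hi : 0 < i) (hij : i < j) (hj : j ≤ n) (hm1 : 1 ≤ m) (hmn : m ≤ n)
    (hmi : m ≠ i) (hmj : m ≠ j)
    (hspec : lapSpec G = Sdouble i j n m) :
    ((n % 4 = 0 ∨ n % 4 = 3) → (i + j) % 2 = m % 2) ∧
    ((n % 4 = 1 ∨ n % 4 = 2) → (i + j) % 2 ≠ m % 2) :=
  parity_condition_general G n i j m hij hj hspec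
end

section
/- Let n ≥ 7 be a prime number. Then for no choice of 0 < i < n and m ∉ {0,i,n} is there a simple connected graph of order n whose Laplacian spectrum equals the multiset {0,1,...,n-1} \ {i} with m counted twice. -/
open SimpleGraph Polynomial

/-
If a connected graph on `n` vertices has Laplacian spectrum `0, μ₂, …, μₙ`, then
`μ₂ ⋯ μₙ = n · τ` for an integer `τ` (a cofactor of the Laplacian): the Laplacian kills the
constant vectors, so every row of the adjugate of `-L` sums to the coefficient `μ₂ ⋯ μₙ` (up to
sign) of `X` in `χ_L`, while connectedness makes all entries of that adjugate equal. For the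
spectrum `S_{{i,n},n}^m` the product is `m` times a product of integers in `(0, n)`, which a
prime `n` cannot divide.
-/

namespace Matrix

variable {ι R : Type*} [Fintype ι] [DecidableEq ι] [CommRing R]

theorem charmatrix_mulVec_one {A : Matrix ι ι R} (hA : A *ᵥ 1 = 0) :
    charmatrix A *ᵥ 1 = (X : R[X]) • 1 := by
  funext i
  have h := RingHom.map_mulVec (C : R →+* R[X]) A 1 i
  rw [hA, Pi.zero_apply, map_zero] at h
  simp only [charmatrix, RingHom.mapMatrix_apply, sub_mulVec, Pi.sub_apply, scalar_apply,
    mulVec_diagonal]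
  simpa [Function.comp_def, Pi.one_def] using h.symm

theorem map_evalRingHom_zero_charmatrix (A : Matrix ι ι R) :
    (charmatrix A).map (evalRingHom 0) = -A := by
  ext i j
  by_cases h : i = j
  · subst h; simp
  · simp [charmatrix_apply_ne _ _ _ h]

/- Since `(X - A) *ᵥ 1 = X • 1`, multiplying by `adj (X - A)` gives `adj (X - A) *ᵥ 1 = q • 1`;
then evaluate at `X = 0`. -/
theorem adjugate_neg_mulVec_one {A : Matrix ι ι R} (hA : A *ᵥ 1 = 0) {q : R[X]}
    (hq : A.charpoly = X * q) : (-A).adjugate *ᵥ 1 = q.eval 0 • 1 := by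
  have hX : (X : R[X]) • ((charmatrix A).adjugate *ᵥ 1) = (X : R[X]) • q • (1 : ι → R[X]) := by
    rw [← mulVec_smul, ← charmatrix_mulVec_one hA, mulVec_mulVec, adjugate_mul, smul_mulVec,
      one_mulVec, ← charpoly, hq, mul_smul]
  have hadj : (charmatrix A).adjugate *ᵥ 1 = q • 1 :=
    funext fun i ↦ isRegular_X.left <| by
      simpa only [Pi.smul_apply, smul_eq_mul] using congrFun hX i
  ext i
  have h := RingHom.map_mulVec (evalRingHom 0) (charmatrix A).adjugate 1 i
  rw [hadj, ← RingHom.mapMatrix_apply, RingHom.map_adjugate, RingHom.mapMatrix_apply,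
    map_evalRingHom_zero_charmatrix] at h
  simpa [Function.comp_def, Pi.one_def] using h.symm

theorem adjugate_apply_eq_of_isSymm {A : Matrix ι ι R} (hA : A.IsSymm) (hdet : A.det = 0)
    (hker : ∀ x, A *ᵥ x = 0 → ∀ i j, x i = x j) (i j k l : ι) :
    A.adjugate i j = A.adjugate k l := by
  have hcol : ∀ j i k, A.adjugate i j = A.adjugate k j := fun j ↦ by
    refine hker _ (funext fun i ↦ ?_)
    simpa [mul_apply, mulVec, dotProduct, hdet] using congrFun (congrFun (mul_adjugate A) i) j
  have hsymm : A.adjugateᵀ = A.adjugate := by rw [adjugate_transpose, hA.eq]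
  calc A.adjugate i j = A.adjugate l j := hcol j i l
    _ = A.adjugate j l := congrFun (congrFun hsymm j) l
    _ = A.adjugate k l := hcol l j k

end Matrix

namespace SimpleGraph

variable {V : Type*} [Fintype V] [DecidableEq V]

theorem map_lapMatrix (G : SimpleGraph V) [DecidableRel G.Adj] {R S : Type*} [Ring R] [Ring S]
    (f : R →+* S) : (G.lapMatrix R).map f = G.lapMatrix S := by
  ext i j
  by_cases h : i = j
  · subst h; simp [lapMatrix, degMatrix]
  · simp [lapMatrix, degMatrix, h, adjMatrix_apply, apply_ite f]

theorem adjugate_neg_lapMatrix_apply_eq {G : SimpleGraph V} [DecidableRel G.Adj]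
    (hG : G.Connected) (i j k l : V) :
    (-G.lapMatrix ℝ).adjugate i j = (-G.lapMatrix ℝ).adjugate k l := by
  have : Nonempty V := hG.nonempty
  refine Matrix.adjugate_apply_eq_of_isSymm (G.isSymm_lapMatrix ℝ).neg ?_ ?_ i j k l
  · rw [Matrix.det_neg, det_lapMatrix_eq_zero, mul_zero]
  · intro x hx i j
    rw [Matrix.neg_mulVec, neg_eq_zero, lapMatrix_mulVec_eq_zero_iff_forall_reachable] at hx
    exact hx i j (hG.preconnected i j)

theorem adjugate_neg_lapMatrix_apply_eq_intCast (G : SimpleGraph V) [DecidableRel G.Adj] (i j : V) :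
    (-G.lapMatrix ℝ).adjugate i j = ((-G.lapMatrix ℤ).adjugate i j : ℤ) := by
  have h := (Int.castRingHom ℝ).map_adjugate (-G.lapMatrix ℤ)
  rw [map_neg, RingHom.mapMatrix_apply, RingHom.mapMatrix_apply, map_lapMatrix] at h
  rw [← h]
  rfl

theorem exists_prod_eq_card_mul_of_lapSpec_eq_zero_cons {G : SimpleGraph V} (hG : G.Connected)
    {μ : Multiset ℝ} (hμ : lapSpec G = 0 ::ₘ μ) : ∃ t : ℤ, μ.prod = Fintype.card V * t := by
  let := Classical.decRel G.Adj
  set L := G.lapMatrix ℝ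
  set q : ℝ[X] := (μ.map (X - C ·)).prod
  have hq : L.charpoly = X * q := by
    rw [(G.isHermitian_lapMatrix ℝ).splits_charpoly.eq_prod_roots_of_monic L.charpoly_monic,
      show L.charpoly.roots = 0 ::ₘ μ from hμ, Multiset.map_cons, Multiset.prod_cons, map_zero,
      sub_zero]
  have hq0 : q.eval 0 = (-1) ^ μ.card * μ.prod := by
    simp [q, eval_multiset_prod, Multiset.map_map]
  obtain ⟨v⟩ := hG.nonempty
  have hrow := congrFun (Matrix.adjugate_neg_mulVec_one (G.lapMatrix_mulVec_const_eq_zero) hq) v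
  have hsum : q.eval 0 = Fintype.card V * (-L).adjugate v v := by
    have hrow' : ∑ j, (-L).adjugate v j = q.eval 0 := by
      simpa [Matrix.mulVec, dotProduct] using hrow
    rw [← hrow', Finset.sum_congr rfl fun j _ ↦ adjugate_neg_lapMatrix_apply_eq hG v j v v,
      Finset.sum_const, Finset.card_univ, nsmul_eq_mul]
  have hprod : μ.prod = (-1) ^ μ.card * q.eval 0 := by
    rw [hq0, ← mul_assoc, ← mul_pow]
    norm_num
  refine ⟨(-1) ^ μ.card * (-G.lapMatrix ℤ).adjugate v v, ?_⟩
  rw [hprod, hsum, adjugate_neg_lapMatrix_apply_eq_intCast]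
  push_cast
  ring

end SimpleGraph

theorem Nat.Prime.not_dvd_multiset_prod {p : ℕ} (hp : p.Prime) {s : Multiset ℕ}
    (hs : ∀ a ∈ s, 0 < a ∧ a < p) : ¬p ∣ s.prod := fun h ↦ by
  obtain ⟨a, ha, hpa⟩ := hp.prime.exists_mem_multiset_dvd h
  exact Nat.not_dvd_of_pos_of_lt (hs a ha).1 (hs a ha).2 hpa

theorem Sdouble_self_eq_zero_cons {i n m : ℕ} (hi : 0 < i) (hn : 0 < n) :
    Sdouble i n n m = 0 ::ₘ (m ::ₘ ((Finset.Ioo 0 n).erase i).val).map Nat.cast := by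
  have h : ((Finset.range (n + 1)).erase i).erase n = insert 0 ((Finset.Ioo 0 n).erase i) := by
    ext k
    simp only [Finset.mem_erase, Finset.mem_range, Finset.mem_insert, Finset.mem_Ioo]
    omega
  rw [Sdouble, ← Finset.erase_val, ← Finset.erase_val, h,
    Finset.insert_val_of_notMem (by simp), Multiset.cons_swap, Multiset.map_cons, Nat.cast_zero]

theorem not_realizable_prime_general {n i m : ℕ} (hp : n.Prime)
    (hi : 0 < i) (hm1 : 1 ≤ m) (hmn : m ≤ n - 1) :
    ∀ G : SimpleGraph (Fin n), G.Connected → lapSpec G ≠ Sdouble i n n m := by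
  intro G hG hspec
  let s := m ::ₘ ((Finset.Ioo 0 n).erase i).val
  obtain ⟨t, ht⟩ := G.exists_prod_eq_card_mul_of_lapSpec_eq_zero_cons hG
    (hspec.trans (Sdouble_self_eq_zero_cons hi hp.pos))
  rw [Fintype.card_fin, ← Nat.cast_multiset_prod] at ht
  refine hp.not_dvd_multiset_prod (s := s) ?_ (Int.natCast_dvd_natCast.mp ⟨t, ?_⟩)
  · simp only [s, Multiset.mem_cons, Finset.mem_val, Finset.mem_erase, Finset.mem_Ioo]
    omega
  · refine Int.cast_injective (α := ℝ) ?_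
    rw [Int.cast_natCast, Int.cast_mul, Int.cast_natCast]
    exact ht

/-- For prime `n ≥ 7`, no set `S_{{i,n},n}^m` is Laplacian realizable: there is no connected
graph of order `n` whose Laplacian spectrum is `{0,1,…,n-1} \ {i}` with `m` counted twice. -/
theorem not_realizable_prime {n i m : ℕ} (hn : 7 ≤ n) (hp : n.Prime)
    (hi : 0 < i) (hin : i < n) (hm1 : 1 ≤ m) (hmn : m ≤ n - 1) (hmi : m ≠ i) :
    ∀ G : SimpleGraph (Fin n), G.Connected → lapSpec G ≠ Sdouble i n n m :=
  not_realizable_prime_general hp hi hm1 hmn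
end
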